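/- Let G ∈ ℝ^{n×n} with nonnegative entries and ‖G‖_∞ < 1. Then I − G is invertible and triu(G(I−G)^{-1}) ≤ triu(G) + triu((‖G‖_∞²/(1−‖G‖_∞))·𝟙ₙ𝟙ₙᵀ) componentwise, where triu(A) denotes the upper triangular part of A (entries with i ≤ j kept, others zero) and 𝟙ₙ is the all-ones column vector. -/

import Mathlib

open Matrix
open scoped NNReal

/-- The infinity (max row sum) norm of a real square matrix. -/
noncomputable def infNorm {n : ℕ} (A : Matrix (Fin n) (Fin n) ℝ) : ℝ :=
  ⨆ i, ∑ j, |A i j|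

/-- Upper triangular part of a matrix. -/
def triu {n : ℕ} (A : Matrix (Fin n) (Fin n) ℝ) : Matrix (Fin n) (Fin n) ℝ :=
  Matrix.of fun i j => if i ≤ j then A i j else 0

attribute [local instance] Matrix.linftyOpNormedRing Matrix.linftyOpNormedSpace

lemma infNorm_eq_norm {n : ℕ} (A : Matrix (Fin n) (Fin n) ℝ) : infNorm A = ‖A‖ := by
  rw [Matrix.linfty_opNorm_def, infNorm]
  rcases Nat.eq_zero_or_pos n with hn | hn
  · subst hn
    simp [ciSup_of_empty]
  · haveI : Nonempty (Fin n) := ⟨⟨0, hn⟩⟩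
    rw [Finset.sup_univ_eq_ciSup, NNReal.coe_iSup]
    congr 1
    ext i
    rw [NNReal.coe_sum]
    simp [Real.norm_eq_abs]

lemma entry_le_norm {n : ℕ} (A : Matrix (Fin n) (Fin n) ℝ) (i j : Fin n) :
    |A i j| ≤ ‖A‖ := by
  rw [Matrix.linfty_opNorm_def]
  have h1 : ‖A i j‖₊ ≤ ∑ j', ‖A i j'‖₊ :=
    Finset.single_le_sum (f := fun j' => ‖A i j'‖₊) (fun _ _ => zero_le) (Finset.mem_univ j)
  have h2 : (∑ j', ‖A i j'‖₊) ≤ Finset.univ.sup fun i => ∑ j', ‖A i j'‖₊ :=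
    Finset.le_sup (f := fun i => ∑ j', ‖A i j'‖₊) (Finset.mem_univ i)
  calc |A i j| = ((‖A i j‖₊ : ℝ≥0) : ℝ) := by simp [Real.norm_eq_abs]
    _ ≤ _ := NNReal.coe_le_coe.mpr (h1.trans h2)

lemma pow_entry_nonneg {n : ℕ} (G : Matrix (Fin n) (Fin n) ℝ) (hpos : ∀ i j, 0 ≤ G i j)
    (k : ℕ) (i j : Fin n) : 0 ≤ (G ^ k) i j := by
  induction k generalizing i j with
  | zero =>
    simp only [pow_zero, Matrix.one_apply]
    split <;> norm_num
  | succ k ih =>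
    rw [pow_succ, Matrix.mul_apply]
    exact Finset.sum_nonneg fun l _ => mul_nonneg (ih i l) (hpos l j)

theorem stmt_8 {n : ℕ} (G : Matrix (Fin n) (Fin n) ℝ) (hpos : ∀ i j, 0 ≤ G i j)
    (h : infNorm G < 1) :
    IsUnit (1 - G) ∧
    ∀ i j, triu (G * (1 - G)⁻¹) i j ≤
      triu G i j +
        triu (Matrix.of fun _ _ => (infNorm G) ^ 2 / (1 - infNorm G) : Matrix (Fin n) (Fin n) ℝ) i j := by
  set a := infNorm G with ha
  have h1 : ‖G‖ < 1 := by rwa [← infNorm_eq_norm]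
  have ha0 : 0 ≤ a := by rw [ha, infNorm_eq_norm]; exact norm_nonneg _
  have hu : IsUnit (1 - G) := isUnit_one_sub_of_norm_lt_one h1
  refine ⟨hu, ?_⟩
  -- the inverse is the geometric series
  have hinv : (1 - G)⁻¹ = ∑' k : ℕ, G ^ k := by
    rw [Matrix.nonsing_inv_eq_ringInverse, ← geom_series_eq_inverse G h1]; rfl
  have hS : HasSum (fun k : ℕ => G ^ k) ((1 - G)⁻¹) := by
    rw [hinv]; exact (summable_geometric_of_norm_lt_one h1).hasSum
  have hS1 : HasSum (fun k : ℕ => G ^ (k + 1)) (G * (1 - G)⁻¹) := by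
    have := hS.mul_left G
    simpa [← pow_succ'] using this
  -- entrywise sums
  intro i j
  have hSij : HasSum (fun k : ℕ => (G ^ (k + 1)) i j) ((G * (1 - G)⁻¹) i j) := by
    let φ : Matrix (Fin n) (Fin n) ℝ →ₗ[ℝ] ℝ :=
      { toFun := fun A => A i j, map_add' := fun _ _ => rfl, map_smul' := fun _ _ => rfl }
    have φcont : Continuous φ := LinearMap.continuous_of_finiteDimensional φ
    exact hS1.map φ.toAddMonoidHom φcont
  have hsum : Summable fun k : ℕ => (G ^ (k + 1)) i j := hSij.summable
  have hsplit : (G * (1 - G)⁻¹) i j = G i j + ∑' k : ℕ, (G ^ (k + 2)) i j := by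
    rw [← hSij.tsum_eq, Summable.tsum_eq_zero_add hsum]
    simp [pow_one]
  -- bound the tail
  have hgeom : Summable fun k : ℕ => a ^ (k + 2) := by
    have := summable_geometric_of_lt_one ha0 h
    exact (this.mul_left (a ^ 2)).congr fun k => by ring
  have hle : ∀ k : ℕ, (G ^ (k + 2)) i j ≤ a ^ (k + 2) := fun k => by
    calc (G ^ (k + 2)) i j ≤ |(G ^ (k + 2)) i j| := le_abs_self _
      _ ≤ ‖G ^ (k + 2)‖ := entry_le_norm _ i j
      _ ≤ ‖G‖ ^ (k + 2) := norm_pow_le' _ (by omega)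
      _ = a ^ (k + 2) := by rw [← infNorm_eq_norm]
  have htail : ∑' k : ℕ, (G ^ (k + 2)) i j ≤ a ^ 2 / (1 - a) := by
    have hsum2 : Summable fun k : ℕ => (G ^ (k + 2)) i j :=
      Summable.of_nonneg_of_le (fun k => pow_entry_nonneg G hpos (k + 2) i j) hle hgeom
    calc ∑' k : ℕ, (G ^ (k + 2)) i j ≤ ∑' k : ℕ, a ^ (k + 2) :=
          Summable.tsum_le_tsum hle hsum2 hgeom
      _ = a ^ 2 * ∑' k : ℕ, a ^ k := by
          rw [← tsum_mul_left]; exact tsum_congr fun k => by ring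
      _ = a ^ 2 / (1 - a) := by
          rw [tsum_geometric_of_lt_one ha0 h, div_eq_mul_inv]
  -- conclude
  simp only [triu, Matrix.of_apply]
  split
  · rw [hsplit]
    exact add_le_add_right htail _
  · simp
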